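/- arXiv:1707.03854 — 6 statements merged into one kernel-verified Lean document; each statement's English description precedes it below -/
import Mathlib

section
/- In the Poissonized multi-population model, for any number of populations m and any extrapolation factors t_j ≥ 0 (j = 1,...,m), the estimator Û is an unbiased estimator of the number of new elements U, i.e. E[Û] = E[U]. -/
/-! Both `Û` and `U` are sums of per-element terms. Writing `N_x`, `N'_x` for the count vectors of
an element `x`, `U_x = 1[N_x = 0] - 1[N_x = 0] 1[N'_x = 0]`, and collecting the fingerprint sum by
elements gives `Û_x = 1[N_x = 0] - ∏ⱼ (-tⱼ)^{N_{x,j}}` (the excluded tuple `0` contributes `1`).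
Every term is a product of powers `z^N` of independent Poisson counts, so its expectation is a
product of Poisson generating functions `E[z^N] = exp (r (z - 1))`. Since `1[N = 0] = 0^N`, both
`E[∏ⱼ (-tⱼ)^{N_{x,j}}]` and `P(N_x = 0, N'_x = 0)` equal `∏ⱼ exp (-(1 + tⱼ) λ_{x,j})`. -/

open MeasureTheory ProbabilityTheory Real Finset
open scoped NNReal

noncomputable section

/-- Index type for the Poisson counts: `Sum.inl (x, j)` indexes the period-one count
`N_{x,j}`, and `Sum.inr (x, j)` indexes the period-two count `N'_{x,j}`. -/
abbrev Idx (X : Type*) (m : ℕ) := (X × Fin m) ⊕ (X × Fin m)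

/-- Joint law of the mutually independent Poisson counts: `N_{x,j} ~ Poisson(λ_{x,j})`
and `N'_{x,j} ~ Poisson(t_j · λ_{x,j})`, where `λ_{x,j} = lam x j`. -/
noncomputable def jointLaw (X : Type*) [Fintype X] (m : ℕ) (lam : X → Fin m → ℝ≥0)
    (t : Fin m → ℝ≥0) : Measure (Idx X m → ℕ) :=
  Measure.pi fun idx =>
    poissonMeasure (Sum.elim (fun q => lam q.1 q.2) (fun q => t q.2 * lam q.1 q.2) idx)

/-- The number of new elements `U`: elements unseen in period one and seen in period two. -/
def numNew {X : Type*} {m : ℕ} (ω : Idx X m → ℕ) : ℝ :=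
  (Set.ncard {x : X | (∀ j, ω (Sum.inl (x, j)) = 0) ∧ (∃ j, ω (Sum.inr (x, j)) ≠ 0)} : ℝ)

/-- Fingerprint entry `φ_{i_1,...,i_m}`: the number of domain elements observed exactly
`i j` times in population `j` during period one. -/
def fingerprint {X : Type*} {m : ℕ} (ω : Idx X m → ℕ) (i : Fin m → ℕ) : ℝ :=
  (Set.ncard {x : X | ∀ j, ω (Sum.inl (x, j)) = i j} : ℝ)

/-- The unbiased linear estimator `Û`. -/
noncomputable def Uhat {X : Type*} {m : ℕ} (t : Fin m → ℝ≥0) (ω : Idx X m → ℕ) : ℝ :=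
  -∑' i : {i : Fin m → ℕ // i ≠ 0}, (∏ j, (-(t j : ℝ)) ^ (i.1 j)) * fingerprint ω i.1

lemma hasSum_pow_poissonMeasure (r : ℝ≥0) (z : ℝ) :
    HasSum (fun n : ℕ => exp (-r) * r ^ n / n.factorial * z ^ n) (exp (r * (z - 1))) := by
  have h := (NormedSpace.expSeries_div_hasSum_exp ((r : ℝ) * z)).mul_left (exp (-r))
  rw [← exp_eq_exp_ℝ, ← exp_add, show -(r : ℝ) + r * z = r * (z - 1) by ring] at h
  have hterm (n : ℕ) :
      exp (-r) * r ^ n / n.factorial * z ^ n = exp (-r) * ((r * z) ^ n / n.factorial) := by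
    rw [mul_pow]
    ring
  simpa only [hterm] using h

lemma integrable_pow_poissonMeasure (r : ℝ≥0) (z : ℝ) :
    Integrable (fun n : ℕ => z ^ n) (poissonMeasure r) := by
  rw [integrable_poissonMeasure_iff]
  simpa [abs_pow] using (hasSum_pow_poissonMeasure r |z|).summable

lemma integral_pow_poissonMeasure (r : ℝ≥0) (z : ℝ) :
    ∫ n, z ^ n ∂(poissonMeasure r) = exp (r * (z - 1)) := by
  rw [integral_poissonMeasure]
  exact (hasSum_pow_poissonMeasure r z).tsum_eq

section PoissonVector

variable {ι : Type*} [Fintype ι] (r : ι → ℝ≥0)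

lemma integrable_prod_pow_pi_poissonMeasure (z : ι → ℝ) :
    Integrable (fun ω : ι → ℕ => ∏ i, z i ^ ω i) (Measure.pi fun i => poissonMeasure (r i)) :=
  Integrable.fintype_prod fun i => integrable_pow_poissonMeasure (r i) (z i)

lemma integral_prod_pow_pi_poissonMeasure (z : ι → ℝ) :
    ∫ ω, ∏ i, z i ^ ω i ∂(Measure.pi fun i => poissonMeasure (r i))
      = ∏ i, exp (r i * (z i - 1)) := by
  rw [integral_fintype_prod_eq_prod (fun i n => z i ^ n)]
  exact prod_congr rfl fun i _ => integral_pow_poissonMeasure (r i) (z i)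

lemma integral_sum_sub_prod_pow_pi_poissonMeasure {κ : Type*} (s : Finset κ) (a b : κ → ι → ℝ) :
    ∫ ω, ∑ x ∈ s, (∏ i, a x i ^ ω i - ∏ i, b x i ^ ω i) ∂(Measure.pi fun i => poissonMeasure (r i))
      = ∑ x ∈ s, (∏ i, exp (r i * (a x i - 1)) - ∏ i, exp (r i * (b x i - 1))) := by
  have hint := integrable_prod_pow_pi_poissonMeasure r
  have hsub (x : κ) : Integrable (fun ω : ι → ℕ => ∏ i, a x i ^ ω i - ∏ i, b x i ^ ω i)
      (Measure.pi fun i => poissonMeasure (r i)) := (hint (a x)).sub (hint (b x))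
  rw [integral_finsetSum s fun x _ => hsub x]
  refine sum_congr rfl fun x _ => ?_
  rw [integral_sub (hint (a x)) (hint (b x)), integral_prod_pow_pi_poissonMeasure,
    integral_prod_pow_pi_poissonMeasure]

end PoissonVector

lemma prod_zero_pow_eq_ite {J : Type*} [Fintype J] (n : J → ℕ) :
    ∏ j, (0 : ℝ) ^ n j = if ∀ j, n j = 0 then 1 else 0 := by
  simp only [zero_pow_eq, prod_boole, mem_univ, true_imp_iff]

lemma hasSum_mul_ncard_fiber {α β : Type*} [Fintype α] (f : α → β) (g : β → ℝ) :
    HasSum (fun b => g b * Set.ncard {a | f a = b}) (∑ a, g (f a)) := by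
  classical
  have hfiber : ∀ b, g b * Set.ncard {a | f a = b} = ∑ a, if b = f a then g (f a) else 0 := by
    intro b
    rw [Set.ncard_eq_toFinset_card', Set.toFinset_ofPred, natCast_card_filter, mul_sum]
    refine sum_congr rfl fun a _ => ?_
    by_cases h : b = f a <;> simp [h, eq_comm]
  simp_rw [hfiber]
  exact hasSum_sum fun a _ => hasSum_ite_eq (f a) (g (f a))

section Localization

variable {X : Type*} [Fintype X] [DecidableEq X] {m : ℕ}

lemma prod_ite_fst_eq {J M : Type*} [Fintype J] [CommMonoid M] (x : X) (f : X × J → M) :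
    ∏ q : X × J, (if q.1 = x then f q else 1) = ∏ j, f (x, j) := by
  rw [Fintype.prod_prod_type, Fintype.prod_eq_single x fun y hy => by simp [hy]]
  simp

def blockWeight (x : X) (u v : Fin m → ℝ) : Idx X m → ℝ :=
  Sum.elim (fun q => if q.1 = x then u q.2 else 1) (fun q => if q.1 = x then v q.2 else 1)

lemma prod_blockWeight (x : X) (u v : Fin m → ℝ) (F : Idx X m → ℝ → ℝ) (hF : ∀ i, F i 1 = 1) :
    ∏ i, F i (blockWeight x u v i)
      = (∏ j, F (.inl (x, j)) (u j)) * ∏ j, F (.inr (x, j)) (v j) := by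
  rw [Fintype.prod_sum_type]
  simp only [blockWeight, Sum.elim_inl, Sum.elim_inr, apply_ite (F _), hF]
  rw [prod_ite_fst_eq x fun q => F (.inl q) (u q.2),
    prod_ite_fst_eq x fun q => F (.inr q) (v q.2)]

lemma prod_blockWeight_pow (x : X) (u v : Fin m → ℝ) (ω : Idx X m → ℕ) :
    ∏ i, blockWeight x u v i ^ ω i
      = (∏ j, u j ^ ω (.inl (x, j))) * ∏ j, v j ^ ω (.inr (x, j)) :=
  prod_blockWeight x u v (fun i w => w ^ ω i) fun _ => one_pow _

lemma prod_exp_blockWeight (x : X) (u v : Fin m → ℝ) (r : Idx X m → ℝ≥0) :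
    ∏ i, exp (r i * (blockWeight x u v i - 1))
      = (∏ j, exp (r (.inl (x, j)) * (u j - 1))) * ∏ j, exp (r (.inr (x, j)) * (v j - 1)) :=
  prod_blockWeight x u v (fun i w => exp (r i * (w - 1))) fun _ => by simp

end Localization

lemma numNew_eq_sum_prod_zero_pow {X : Type*} [Fintype X] {m : ℕ} (ω : Idx X m → ℕ) :
    numNew ω = ∑ x, (∏ j, (0 : ℝ) ^ ω (.inl (x, j))
      - (∏ j, (0 : ℝ) ^ ω (.inl (x, j))) * ∏ j, (0 : ℝ) ^ ω (.inr (x, j))) := by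
  classical
  rw [numNew, Set.ncard_eq_toFinset_card', Set.toFinset_ofPred, natCast_card_filter]
  refine sum_congr rfl fun x _ => ?_
  simp only [prod_zero_pow_eq_ite, not_forall.symm]
  split_ifs <;> simp_all

lemma Uhat_eq_sum_prod_pow {X : Type*} [Fintype X] {m : ℕ} (t : Fin m → ℝ≥0) (ω : Idx X m → ℕ) :
    Uhat t ω = ∑ x, (∏ j, (0 : ℝ) ^ ω (.inl (x, j)) - ∏ j, (-(t j : ℝ)) ^ ω (.inl (x, j))) := by
  set N : X → Fin m → ℕ := fun x j => ω (.inl (x, j))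
  set c : (Fin m → ℕ) → ℝ := fun i => ∏ j, (-(t j : ℝ)) ^ i j
  have hfingerprint (i : Fin m → ℕ) : fingerprint ω i = Set.ncard {x | N x = i} := by
    simp only [fingerprint, N, funext_iff]
  calc Uhat t ω = -∑' i, {i | i ≠ 0}.indicator c i * Set.ncard {x | N x = i} := by
        simp only [Uhat, hfingerprint]
        have hsubtype := _root_.tsum_subtype {i | i ≠ 0} fun i => c i * Set.ncard {x | N x = i}
        simp only [Set.indicator_mul_left] at hsubtype
        exact congrArg _ hsubtype
    _ = -∑ x, {i | i ≠ 0}.indicator c (N x) := by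
        rw [(hasSum_mul_ncard_fiber N _).tsum_eq]
    _ = _ := by
        rw [← sum_neg_distrib]
        refine sum_congr rfl fun x _ => ?_
        change -{i | i ≠ 0}.indicator c (N x) = ∏ j, (0 : ℝ) ^ N x j - c (N x)
        have hN : (∀ j, N x j = 0) ↔ N x = 0 := funext_iff.symm
        simp only [prod_zero_pow_eq_ite, hN]
        by_cases h : N x = 0
        · simp [h, c]
        · simp [h]

theorem uhat_unbiased_general {X : Type*} [Fintype X] {m : ℕ}
    (p : X → Fin m → ℝ≥0) (n : Fin m → ℝ≥0) (t : Fin m → ℝ≥0) :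
    ∫ ω, Uhat t ω ∂(jointLaw X m (fun x j => n j * p x j) t)
      = ∫ ω, numNew ω ∂(jointLaw X m (fun x j => n j * p x j) t) := by
  classical
  have hUhat (ω : Idx X m → ℕ) : Uhat t ω = ∑ x, (∏ i, blockWeight x 0 1 i ^ ω i
      - ∏ i, blockWeight x (fun j => -(t j : ℝ)) 1 i ^ ω i) := by
    simp only [Uhat_eq_sum_prod_pow, prod_blockWeight_pow, Pi.zero_apply, Pi.one_apply, one_pow,
      prod_const_one, mul_one]
  have hnumNew (ω : Idx X m → ℕ) : numNew ω
      = ∑ x, (∏ i, blockWeight x 0 1 i ^ ω i - ∏ i, blockWeight x 0 0 i ^ ω i) := by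
    simp only [numNew_eq_sum_prod_zero_pow, prod_blockWeight_pow, Pi.zero_apply, Pi.one_apply,
      one_pow, prod_const_one, mul_one]
  simp only [hUhat, hnumNew, jointLaw, integral_sum_sub_prod_pow_pi_poissonMeasure,
    prod_exp_blockWeight, Sum.elim_inl, Sum.elim_inr]
  refine sum_congr rfl fun x _ => ?_
  simp only [← prod_mul_distrib, ← exp_add, Pi.zero_apply, Pi.one_apply]
  congr 1
  refine prod_congr rfl fun j _ => ?_
  push_cast
  ring_nf

/-- **Proposition 1**: for any number of populations `m` and any extrapolation factors
`t j ≥ 0`, the estimator `Û` is an unbiased estimator of `U`, i.e. `E[Û] = E[U]`. -/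
theorem uhat_unbiased {X : Type*} [Fintype X] {m : ℕ}
    (p : X → Fin m → ℝ≥0) (hp : ∀ j, ∑ x, p x j = 1)
    (n : Fin m → ℝ≥0) (hn : ∀ j, 0 < n j) (t : Fin m → ℝ≥0) :
    ∫ ω, Uhat t ω ∂(jointLaw X m (fun x j => n j * p x j) t)
      = ∫ ω, numNew ω ∂(jointLaw X m (fun x j => n j * p x j) t) :=
  uhat_unbiased_general p n t

end
end

section
/- In the Poissonized multi-population model, the expected number of new elements admits the absolutely convergent alternating-series representation E[U] = −∑_{(i_1,...,i_m)≠(0,...,0)} (∏_{j=1}^m (−t_j)^{i_j}) · E[φ_{i_1,...,i_m}], where E[φ_{i_1,...,i_m}] = ∑_{x∈X} ∏_{j=1}^m e^{−λ_{x,j}} λ_{x,j}^{i_j} / i_j!. -/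
open MeasureTheory ProbabilityTheory Real Finset
open scoped NNReal

noncomputable section

/-!
Each domain element contributes independently. For a fixed `x` the period-one counts
`N_{x,j}` are independent Poisson variables, so `∑_i ∏_j (-t_j)^{i_j} P(N_{x,·} = i)` factors
into one-dimensional Poisson generating functions and equals
`∏_j e^{-λ_{x,j}} e^{-t_j λ_{x,j}} = P(N_{x,·} = 0, N'_{x,·} = 0)`; the same computation with
`t_j` in place of `-t_j` gives absolute convergence. Removing the term `i = 0`, which is
`P(N_{x,·} = 0)`, leaves minus the probability that `x` is new.
-/

lemma HasSum.tsum_subtype_ne {α β : Type*} [AddCommGroup α] [TopologicalSpace α]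
    [IsTopologicalAddGroup α] [T2Space α] {f : β → α} {a : α} (hf : HasSum f a) (b : β) :
    ∑' x : {x // x ≠ b}, f x = a - f b :=
  ((hasSum_singleton b f).hasSum_iff_compl.mp hf).tsum_eq

section ProdPi

variable {R κ : Type*} [NormedCommRing R]

lemma summable_norm_prod_pi {m : ℕ} {g : Fin m → κ → R} (hg : ∀ j, Summable fun k => ‖g j k‖) :
    Summable fun i : Fin m → κ => ‖∏ j, g j (i j)‖ := by
  induction m with
  | zero => exact Summable.of_finite
  | succ m ih =>
    rw [← (Fin.consEquiv fun _ => κ).summable_iff]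
    simpa [Function.comp_def, Fin.prod_univ_succ] using (hg 0).mul_norm (ih fun j => hg j.succ)

lemma hasSum_prod_pi [CompleteSpace R] {m : ℕ} {g : Fin m → κ → R}
    (hg : ∀ j, Summable fun k => ‖g j k‖) :
    HasSum (fun i : Fin m → κ => ∏ j, g j (i j)) (∏ j, ∑' k, g j k) := by
  induction m with
  | zero => simpa only [Fin.prod_univ_zero] using hasSum_unique (fun _ : Fin 0 → κ => (1 : R))
  | succ m ih =>
    have hhead : HasSum (g 0) (∑' k, g 0 k) := (hg 0).of_norm.hasSum
    have htail : HasSum (fun i : Fin m → κ => ∏ j, g j.succ (i j))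
        (∏ j : Fin m, ∑' k, g j.succ k) :=
      ih fun j => hg j.succ
    have htail_norm : Summable fun i : Fin m → κ => ‖∏ j, g j.succ (i j)‖ :=
      summable_norm_prod_pi fun j => hg j.succ
    have hpairs := summable_mul_of_summable_norm (hg 0) htail_norm
    have hmul := hhead.mul htail hpairs
    rw [← (Fin.consEquiv fun _ => κ).hasSum_iff]
    simpa [Function.comp_def, Fin.prod_univ_succ] using hmul

end ProdPi

lemma hasSum_pow_mul_poissonMeasure_real (s : ℝ) (r : ℝ≥0) :
    HasSum (fun k => s ^ k * (poissonMeasure r).real {k}) (exp (-r) * exp (s * r)) := by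
  have h := (NormedSpace.expSeries_div_hasSum_exp (s * r)).mul_left (exp (-r))
  rw [← exp_eq_exp_ℝ] at h
  convert h using 1
  · rfl
  funext k
  rw [poissonMeasure_real_singleton, mul_pow]
  ring

lemma summable_norm_pow_mul_poissonMeasure_real (s : ℝ) (r : ℝ≥0) :
    Summable fun k => ‖s ^ k * (poissonMeasure r).real {k}‖ := by
  simpa [abs_of_nonneg] using (hasSum_pow_mul_poissonMeasure_real |s| r).summable

lemma summable_norm_prod_pow_mul_poissonMeasure_real {m : ℕ} (s : Fin m → ℝ) (r : Fin m → ℝ≥0) :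
    Summable fun i : Fin m → ℕ => ‖∏ j, s j ^ (i j) * (poissonMeasure (r j)).real {i j}‖ :=
  summable_norm_prod_pi (g := fun j k => s j ^ k * (poissonMeasure (r j)).real {k})
    fun _ => summable_norm_pow_mul_poissonMeasure_real _ _

lemma hasSum_prod_pow_mul_poissonMeasure_real {m : ℕ} (s : Fin m → ℝ) (r : Fin m → ℝ≥0) :
    HasSum (fun i : Fin m → ℕ => ∏ j, s j ^ (i j) * (poissonMeasure (r j)).real {i j})
      (∏ j, exp (-(r j : ℝ)) * exp (s j * r j)) := by
  have h := hasSum_prod_pi (g := fun j k => s j ^ k * (poissonMeasure (r j)).real {k})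
    fun _ => summable_norm_pow_mul_poissonMeasure_real _ _
  simpa only [(hasSum_pow_mul_poissonMeasure_real _ _).tsum_eq] using h

lemma integral_ncard_setOf {Ω X : Type*} [MeasurableSpace Ω] [Fintype X] (μ : Measure Ω)
    [IsFiniteMeasure μ] (P : X → Ω → Prop) (hP : ∀ x, MeasurableSet {ω | P x ω}) :
    ∫ ω, ({x | P x ω}.ncard : ℝ) ∂μ = ∑ x, μ.real {ω | P x ω} := by
  classical
  have hcount : ∀ ω, ({x | P x ω}.ncard : ℝ) = ∑ x, {ω | P x ω}.indicator 1 ω := by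
    intro ω
    rw [Set.ncard_eq_toFinset_card', Set.toFinset_ofPred, Finset.card_filter]
    push_cast
    rfl
  simp_rw [hcount]
  rw [integral_finsetSum _ fun x _ => (integrable_const 1).indicator (hP x)]
  simp_rw [integral_indicator_one (hP _)]

section PoissonCounts

variable {X : Type*} [Fintype X] {m : ℕ} (lam : X → Fin m → ℝ≥0) (t : Fin m → ℝ≥0)

instance : IsProbabilityMeasure (jointLaw X m lam t) := by
  unfold jointLaw
  infer_instance

lemma jointLaw_real_cylinder (x : X) (D E : Fin m → Set ℕ) :
    (jointLaw X m lam t).real {ω | (∀ j, ω (.inl (x, j)) ∈ D j) ∧ ∀ j, ω (.inr (x, j)) ∈ E j} =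
      (∏ j, (poissonMeasure (lam x j)).real (D j)) *
        ∏ j, (poissonMeasure (t j * lam x j)).real (E j) := by
  classical
  have hcyl : {ω : Idx X m → ℕ | (∀ j, ω (.inl (x, j)) ∈ D j) ∧ ∀ j, ω (.inr (x, j)) ∈ E j} =
      Set.univ.pi (Sum.elim (fun q => if q.1 = x then D q.2 else Set.univ)
        (fun q => if q.1 = x then E q.2 else Set.univ)) := by
    ext ω
    simp [Sum.forall, Prod.forall, forall_comm (α := X)]
  rw [hcyl, measureReal_def, jointLaw, Measure.pi_pi, Fintype.prod_sum_type,
    Fintype.prod_prod_type, Fintype.prod_prod_type, Fintype.prod_eq_single x fun _ h => by simp [h],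
    Fintype.prod_eq_single x fun _ h => by simp [h]]
  simp [ENNReal.toReal_prod, measureReal_def]

lemma integral_fingerprint (i : Fin m → ℕ) :
    ∫ ω, fingerprint ω i ∂(jointLaw X m lam t) =
      ∑ x, ∏ j, (poissonMeasure (lam x j)).real {i j} := by
  simp_rw [fingerprint]
  rw [integral_ncard_setOf _ _ fun _ => .of_discrete]
  refine Finset.sum_congr rfl fun x _ => ?_
  simpa using jointLaw_real_cylinder lam t x (fun j => {i j}) fun _ => Set.univ

lemma integral_numNew :
    ∫ ω, numNew ω ∂(jointLaw X m lam t) =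
      ∑ x, ((∏ j, exp (-(lam x j : ℝ))) -
        ∏ j, exp (-(lam x j : ℝ)) * exp (-(t j : ℝ) * lam x j)) := by
  simp_rw [numNew]
  rw [integral_ncard_setOf _ _ fun _ => .of_discrete]
  refine Finset.sum_congr rfl fun x _ => ?_
  let cyl (E : Fin m → Set ℕ) : Set (Idx X m → ℕ) :=
    {ω | (∀ j, ω (.inl (x, j)) ∈ ({0} : Set ℕ)) ∧ ∀ j, ω (.inr (x, j)) ∈ E j}
  have hdiff : {ω : Idx X m → ℕ | (∀ j, ω (.inl (x, j)) = 0) ∧ ∃ j, ω (.inr (x, j)) ≠ 0} =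
      cyl (fun _ => Set.univ) \ cyl (fun _ => {0}) := by
    ext ω
    simp only [cyl, Set.mem_ofPred_eq, Set.mem_sdiff, Set.mem_singleton_iff, Set.mem_univ,
      implies_true, and_true, not_and, not_forall, ne_eq]
    tauto
  have hsub : cyl (fun _ => {0}) ⊆ cyl (fun _ => Set.univ) := fun _ hω => ⟨hω.1, fun _ => trivial⟩
  rw [hdiff, measureReal_sdiff hsub .of_discrete, jointLaw_real_cylinder, jointLaw_real_cylinder]
  simp [poissonMeasure_real_singleton, Finset.prod_mul_distrib]

lemma alternating_fingerprint_term_eq (i : Fin m → ℕ) :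
    (∏ j, (-(t j : ℝ)) ^ (i j)) * ∫ ω, fingerprint ω i ∂(jointLaw X m lam t) =
      ∑ x, ∏ j, (-(t j : ℝ)) ^ (i j) * (poissonMeasure (lam x j)).real {i j} := by
  simp only [integral_fingerprint, Finset.mul_sum, Finset.prod_mul_distrib]

lemma summable_norm_alternating_fingerprint :
    Summable fun i : Fin m → ℕ =>
      ‖(∏ j, (-(t j : ℝ)) ^ (i j)) * ∫ ω, fingerprint ω i ∂(jointLaw X m lam t)‖ := by
  simp only [alternating_fingerprint_term_eq]
  refine .of_nonneg_of_le (fun _ => norm_nonneg _) (fun i => norm_sum_le _ _) ?_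
  exact summable_sum fun x _ => summable_norm_prod_pow_mul_poissonMeasure_real _ _

lemma hasSum_alternating_fingerprint :
    HasSum (fun i : Fin m → ℕ =>
        (∏ j, (-(t j : ℝ)) ^ (i j)) * ∫ ω, fingerprint ω i ∂(jointLaw X m lam t))
      (∑ x, ∏ j, exp (-(lam x j : ℝ)) * exp (-(t j : ℝ) * lam x j)) := by
  simp only [alternating_fingerprint_term_eq]
  exact hasSum_sum fun x _ => hasSum_prod_pow_mul_poissonMeasure_real _ _

end PoissonCounts

theorem expected_numNew_alternating_series_general {X : Type*} [Fintype X] {m : ℕ}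
    (t : Fin m → ℝ≥0) (lam : X → Fin m → ℝ≥0) :
    (∀ i : Fin m → ℕ,
        ∫ ω, fingerprint ω i ∂(jointLaw X m lam t)
          = ∑ x : X, ∏ j, Real.exp (-(lam x j : ℝ)) * (lam x j : ℝ) ^ (i j) / (Nat.factorial (i j) : ℝ))
    ∧ Summable (fun i : {i : Fin m → ℕ // i ≠ 0} =>
        |(∏ j, (-(t j : ℝ)) ^ (i.1 j)) * ∫ ω, fingerprint ω i.1 ∂(jointLaw X m lam t)|)
    ∧ ∫ ω, numNew ω ∂(jointLaw X m lam t)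
        = -∑' i : {i : Fin m → ℕ // i ≠ 0},
            (∏ j, (-(t j : ℝ)) ^ (i.1 j)) * ∫ ω, fingerprint ω i.1 ∂(jointLaw X m lam t) := by
  have hzero : (∏ j, (-(t j : ℝ)) ^ ((0 : Fin m → ℕ) j)) *
      ∫ ω, fingerprint ω 0 ∂(jointLaw X m lam t) = ∑ x, ∏ j, exp (-(lam x j : ℝ)) := by
    simp [integral_fingerprint, poissonMeasure_real_singleton]
  refine ⟨fun i => by simp only [integral_fingerprint, poissonMeasure_real_singleton],
    (summable_norm_alternating_fingerprint lam t).subtype _, ?_⟩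
  rw [(hasSum_alternating_fingerprint lam t).tsum_subtype_ne 0, hzero, integral_numNew,
    Finset.sum_sub_distrib, neg_sub]

/-- The expected number of new elements admits the absolutely convergent alternating-series
representation `E[U] = −∑_{i ≠ 0} (∏_j (−t_j)^{i_j}) E[φ_i]`, where
`E[φ_i] = ∑_{x∈X} ∏_j e^{−λ_{x,j}} λ_{x,j}^{i_j} / i_j!`. -/
theorem expected_numNew_alternating_series {X : Type*} [Fintype X] {m : ℕ}
    (p : X → Fin m → ℝ≥0) (hp : ∀ j, ∑ x, p x j = 1)
    (n : Fin m → ℝ≥0) (hn : ∀ j, 0 < n j) (t : Fin m → ℝ≥0)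
    (lam : X → Fin m → ℝ≥0) (hlam : lam = fun x j => n j * p x j) :
    (∀ i : Fin m → ℕ,
        ∫ ω, fingerprint ω i ∂(jointLaw X m lam t)
          = ∑ x : X, ∏ j, Real.exp (-(lam x j : ℝ)) * (lam x j : ℝ) ^ (i j) / (Nat.factorial (i j) : ℝ))
    ∧ Summable (fun i : {i : Fin m → ℕ // i ≠ 0} =>
        |(∏ j, (-(t j : ℝ)) ^ (i.1 j)) * ∫ ω, fingerprint ω i.1 ∂(jointLaw X m lam t)|)
    ∧ ∫ ω, numNew ω ∂(jointLaw X m lam t)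
        = -∑' i : {i : Fin m → ℕ // i ≠ 0},
            (∏ j, (-(t j : ℝ)) ^ (i.1 j)) * ∫ ω, fingerprint ω i.1 ∂(jointLaw X m lam t) :=
  expected_numNew_alternating_series_general t lam
end
end

section
/- Variance decomposition bound: In the Poissonized multi-population model, with h(i_1,...,i_m) := −(∏_{j=1}^m (−t_j)^{i_j}) W(i_1,...,i_m), the weighted estimator satisfies Var(Û^W − U) ≤ E[Φ_+] · sup_{(i_1,...,i_m)≠0} h(i_1,...,i_m)^2 + E[U], where Φ_+ := #{x ∈ X : N_{x,j} ≥ 1 for some j} is the number of distinct elements observed in period one. -/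
open MeasureTheory ProbabilityTheory Real Finset
open scoped NNReal

noncomputable section

/-- The number of distinct elements `Φ₊` observed in period one. -/
def numSeen {X : Type*} {m : ℕ} (ω : Idx X m → ℕ) : ℝ :=
  (Set.ncard {x : X | ∃ j, ω (Sum.inl (x, j)) ≠ 0} : ℝ)

/-- The Poisson tail weight `W(i_1,...,i_m) = P(L ≥ ∑_{j ∈ A} i_j)` where `L ~ Poisson(r)`
and `A = {j : t_j > 1}`. -/
noncomputable def Wpoi {m : ℕ} (r : ℝ) (t : Fin m → ℝ≥0) (i : Fin m → ℕ) : ℝ :=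
  (poissonMeasure r.toNNReal
    {k : ℕ | ∑ j ∈ Finset.univ.filter (fun j => 1 < t j), i j ≤ k}).toReal

/-- The coefficient `h(i_1,...,i_m) = −(∏_j (−t_j)^{i_j}) W(i_1,...,i_m)` of the
fingerprint entry `φ_{i_1,...,i_m}` in the weighted linear estimator. -/
noncomputable def hcoef {m : ℕ} (r : ℝ) (t : Fin m → ℝ≥0) (i : Fin m → ℕ) : ℝ :=
  -(∏ j, (-(t j : ℝ)) ^ (i j)) * Wpoi r t i

/-- The weighted linear estimator `Û^W`. -/
noncomputable def UhatW {X : Type*} {m : ℕ} (r : ℝ) (t : Fin m → ℝ≥0)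
    (ω : Idx X m → ℕ) : ℝ :=
  -∑' i : {i : Fin m → ℕ // i ≠ 0},
    (∏ j, (-(t j : ℝ)) ^ (i.1 j)) * Wpoi r t i.1 * fingerprint ω i.1

/-!
Each domain element `x` contributes `h(N_{x,·})` to `Û^W` when it is seen in period one and
`0` otherwise, so `Û^W − U = ∑ₓ Fₓ` with `Fₓ = h(N_{x,·}) 𝟙[x seen] − 𝟙[x new]`. Each `Fₓ`
depends only on the counts of `x`, so under the product Poisson law the `Fₓ` are independent
and `Var(Û^W − U) = ∑ₓ Var Fₓ ≤ ∑ₓ E[Fₓ²]`. The two indicators are disjoint, whence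
`Fₓ² = h(N_{x,·})² 𝟙[x seen] + 𝟙[x new] ≤ (sup h²) 𝟙[x seen] + 𝟙[x new]`; summing the
expectations over `x` gives `E[Φ₊] sup h² + E[U]`.
-/

lemma natCast_ncard_setOf_eq_sum {α R : Type*} [Fintype α] [AddCommMonoidWithOne R]
    (P : α → Prop) [DecidablePred P] :
    (Set.ncard {a | P a} : R) = ∑ a, if P a then 1 else 0 := by
  rw [Finset.sum_boole, Set.ncard_eq_toFinset_card', Set.toFinset_ofPred]

lemma hasSum_subtype_mul_ite_eq {ι R : Type*} [NonAssocSemiring R] [TopologicalSpace R]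
    [DecidableEq ι] (p : ι → Prop) [DecidablePred p] (c : ι → R) (a : ι) :
    HasSum (fun i : Subtype p => c i * if a = i then 1 else 0) (if p a then c a else 0) := by
  by_cases ha : p a
  · convert hasSum_ite_eq (⟨a, ha⟩ : Subtype p) (c a) using 1
    · funext i
      by_cases hi : a = i
      · subst hi; simp
      · simp [hi, Subtype.ext_iff, eq_comm]
    · simp [ha]
  · convert hasSum_zero using 1
    · funext i
      rw [if_neg (by rintro rfl; exact ha i.2), mul_zero]
    · simp [ha]

lemma variance_le_integral_of_sq_le {Ω : Type*} [MeasurableSpace Ω] {μ : Measure Ω}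
    [IsProbabilityMeasure μ] {F G : Ω → ℝ} (hF : AEStronglyMeasurable F μ) (hG : Integrable G μ)
    (hFG : ∀ ω, F ω ^ 2 ≤ G ω) : variance F μ ≤ ∫ ω, G ω ∂μ :=
  (variance_le_expectation_sq hF).trans <|
    integral_mono_of_nonneg (ae_of_all _ fun ω => sq_nonneg (F ω)) hG (ae_of_all _ hFG)

lemma memLp_two_of_sq_le {Ω : Type*} [MeasurableSpace Ω] {μ : Measure Ω} {F G : Ω → ℝ}
    (hF : AEStronglyMeasurable F μ) (hG : Integrable G μ) (hFG : ∀ ω, F ω ^ 2 ≤ G ω) :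
    MemLp F 2 μ :=
  (memLp_two_iff_integrable_sq hF).2 <| hG.mono' (hF.pow 2) <| ae_of_all _ fun ω => by
    simpa only [Pi.pow_apply, Real.norm_eq_abs, abs_sq] using hFG ω

section PerElement

variable {X : Type*} {m : ℕ}

/-- `q : Fin m ⊕ Fin m` is a population tagged by its period, so `elemCounts x ω ∘ Sum.inl` and
`elemCounts x ω ∘ Sum.inr` are the period-one and period-two counts of `x`. -/
def elemCoord (x : X) : Fin m ⊕ Fin m → Idx X m :=
  Sum.elim (fun j => .inl (x, j)) (fun j => .inr (x, j))

def elemCounts (x : X) (ω : Idx X m → ℕ) : Fin m ⊕ Fin m → ℕ :=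
  fun q => ω (elemCoord x q)

def elemCoords [Fintype X] [DecidableEq X] (x : X) : Finset (Idx X m) :=
  Finset.univ.filter fun i => Sum.elim Prod.fst Prod.fst i = x

lemma elemCoord_mem_elemCoords [Fintype X] [DecidableEq X] (x : X) (q : Fin m ⊕ Fin m) :
    elemCoord x q ∈ elemCoords x :=
  Finset.mem_filter.2 ⟨Finset.mem_univ _, by cases q <;> rfl⟩

lemma indepFun_elemCounts [Fintype X] (ν : Idx X m → Measure ℕ)
    [∀ i, IsProbabilityMeasure (ν i)] {x y : X} (hxy : x ≠ y) :
    IndepFun (elemCounts x) (elemCounts y) (Measure.pi ν) := by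
  classical
  have hcoords : iIndepFun (fun i (ω : Idx X m → ℕ) => ω i) (Measure.pi ν) :=
    iIndepFun_pi (X := fun _ => id) fun _ => aemeasurable_id
  have hdisj : Disjoint (elemCoords (m := m) x) (elemCoords y) := by
    simp only [elemCoords, Finset.disjoint_filter]
    rintro i - rfl
    exact hxy
  exact (hcoords.indepFun_finset _ _ hdisj measurable_pi_apply).comp
    (φ := fun w q => w ⟨elemCoord x q, elemCoord_mem_elemCoords x q⟩)
    (ψ := fun w q => w ⟨elemCoord y q, elemCoord_mem_elemCoords y q⟩)
    (measurable_of_countable _) (measurable_of_countable _)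

def seenInd (v : Fin m ⊕ Fin m → ℕ) : ℝ :=
  if v ∘ Sum.inl ≠ 0 then 1 else 0

def newInd (v : Fin m ⊕ Fin m → ℕ) : ℝ :=
  if v ∘ Sum.inl = 0 ∧ v ∘ Sum.inr ≠ 0 then 1 else 0

def estTerm (r : ℝ) (t : Fin m → ℝ≥0) (v : Fin m ⊕ Fin m → ℕ) : ℝ :=
  if v ∘ Sum.inl ≠ 0 then hcoef r t (v ∘ Sum.inl) else 0

def errTerm (r : ℝ) (t : Fin m → ℝ≥0) (v : Fin m ⊕ Fin m → ℕ) : ℝ :=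
  estTerm r t v - newInd v

lemma norm_seenInd_le (v : Fin m ⊕ Fin m → ℕ) : ‖seenInd v‖ ≤ 1 := by
  unfold seenInd; split_ifs <;> norm_num

lemma norm_newInd_le (v : Fin m ⊕ Fin m → ℕ) : ‖newInd v‖ ≤ 1 := by
  unfold newInd; split_ifs <;> norm_num

lemma numSeen_eq_sum [Fintype X] (ω : Idx X m → ℕ) :
    numSeen ω = ∑ x, seenInd (elemCounts x ω) := by
  classical
  rw [numSeen, natCast_ncard_setOf_eq_sum]
  simp [seenInd, elemCounts, elemCoord, funext_iff]

lemma numNew_eq_sum [Fintype X] (ω : Idx X m → ℕ) :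
    numNew ω = ∑ x, newInd (elemCounts x ω) := by
  classical
  rw [numNew, natCast_ncard_setOf_eq_sum]
  simp [newInd, elemCounts, elemCoord, funext_iff]

lemma fingerprint_eq_sum [Fintype X] (ω : Idx X m → ℕ) (i : Fin m → ℕ) :
    fingerprint ω i = ∑ x, if elemCounts x ω ∘ Sum.inl = i then 1 else 0 := by
  classical
  rw [fingerprint, natCast_ncard_setOf_eq_sum]
  simp [elemCounts, elemCoord, funext_iff]

lemma UhatW_eq_tsum (r : ℝ) (t : Fin m → ℝ≥0) (ω : Idx X m → ℕ) :
    UhatW r t ω = ∑' i : {i : Fin m → ℕ // i ≠ 0}, hcoef r t i * fingerprint ω i := by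
  simp only [UhatW, hcoef, neg_mul, tsum_neg]

lemma UhatW_eq_sum [Fintype X] (r : ℝ) (t : Fin m → ℝ≥0) (ω : Idx X m → ℕ) :
    UhatW r t ω = ∑ x, estTerm r t (elemCounts x ω) := by
  classical
  have h : HasSum (fun i : {i : Fin m → ℕ // i ≠ 0} => hcoef r t i * fingerprint ω i)
      (∑ x, estTerm r t (elemCounts x ω)) := by
    simp only [fingerprint_eq_sum, Finset.mul_sum]
    exact hasSum_sum fun x _ => hasSum_subtype_mul_ite_eq _ _ _
  rw [UhatW_eq_tsum, h.tsum_eq]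

lemma UhatW_sub_numNew_eq_sum [Fintype X] (r : ℝ) (t : Fin m → ℝ≥0) :
    (fun ω : Idx X m → ℕ => UhatW r t ω - numNew ω)
      = ∑ x, fun ω => errTerm r t (elemCounts x ω) := by
  funext ω
  simp only [Finset.sum_apply, UhatW_eq_sum, numNew_eq_sum, errTerm, Finset.sum_sub_distrib]

lemma sq_errTerm_le {r : ℝ} {t : Fin m → ℝ≥0}
    (hbdd : BddAbove (Set.range fun i : {i : Fin m → ℕ // i ≠ 0} => (hcoef r t i.1) ^ 2))
    (v : Fin m ⊕ Fin m → ℕ) :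
    errTerm r t v ^ 2
      ≤ (⨆ i : {i : Fin m → ℕ // i ≠ 0}, (hcoef r t i.1) ^ 2) * seenInd v + newInd v := by
  by_cases hv : v ∘ Sum.inl = 0
  · by_cases hv' : v ∘ Sum.inr = 0 <;> simp [errTerm, estTerm, newInd, seenInd, hv, hv']
  · simpa [errTerm, estTerm, newInd, seenInd, hv] using le_ciSup hbdd ⟨_, hv⟩

end PerElement

instance {X : Type*} [Fintype X] {m : ℕ} (lam : X → Fin m → ℝ≥0) (t : Fin m → ℝ≥0) :
    IsProbabilityMeasure (jointLaw X m lam t) := by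
  rw [jointLaw]
  infer_instance

theorem uhatW_variance_decomposition_general {X : Type*} [Fintype X] {m : ℕ}
    (p : X → Fin m → ℝ≥0)
    (n : Fin m → ℝ≥0) (t : Fin m → ℝ≥0)
    (r : ℝ)
    (hbdd : BddAbove (Set.range fun i : {i : Fin m → ℕ // i ≠ 0} => (hcoef r t i.1) ^ 2)) :
    variance (fun ω => UhatW r t ω - numNew ω) (jointLaw X m (fun x j => n j * p x j) t)
      ≤ (∫ ω, numSeen ω ∂(jointLaw X m (fun x j => n j * p x j) t))
            * (⨆ i : {i : Fin m → ℕ // i ≠ 0}, (hcoef r t i.1) ^ 2)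
          + ∫ ω, numNew ω ∂(jointLaw X m (fun x j => n j * p x j) t) := by
  set μ := jointLaw X m (fun x j => n j * p x j) t
  set M := ⨆ i : {i : Fin m → ℕ // i ≠ 0}, (hcoef r t i.1) ^ 2
  have hseen (x : X) : Integrable (fun ω => seenInd (elemCounts x ω)) μ :=
    .of_bound (measurable_of_countable _).aestronglyMeasurable 1 <|
      ae_of_all _ fun _ => norm_seenInd_le _
  have hnew (x : X) : Integrable (fun ω => newInd (elemCounts x ω)) μ :=
    .of_bound (measurable_of_countable _).aestronglyMeasurable 1 <|
      ae_of_all _ fun _ => norm_newInd_le _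
  have hbound (x : X) := ((hseen x).const_mul M).add (hnew x)
  have hmeas (x : X) : AEStronglyMeasurable (fun ω => errTerm r t (elemCounts x ω)) μ :=
    (measurable_of_countable _).aestronglyMeasurable
  calc variance (fun ω => UhatW r t ω - numNew ω) μ
      = ∑ x, variance (fun ω => errTerm r t (elemCounts x ω)) μ := by
        rw [UhatW_sub_numNew_eq_sum]
        exact IndepFun.variance_sum
          (fun x _ => memLp_two_of_sq_le (hmeas x) (hbound x) fun _ => sq_errTerm_le hbdd _)
          fun x _ y _ hxy => (indepFun_elemCounts _ hxy).comp
            (measurable_of_countable (errTerm r t)) (measurable_of_countable (errTerm r t))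
    _ ≤ ∑ x, ∫ ω, M * seenInd (elemCounts x ω) + newInd (elemCounts x ω) ∂μ :=
        Finset.sum_le_sum fun x _ => variance_le_integral_of_sq_le (hmeas x) (hbound x)
          fun _ => sq_errTerm_le hbdd _
    _ = (∫ ω, numSeen ω ∂μ) * M + ∫ ω, numNew ω ∂μ := by
        simp only [integral_add ((hseen _).const_mul M) (hnew _), integral_const_mul,
          numSeen_eq_sum, numNew_eq_sum, integral_finsetSum _ fun x _ => hseen x,
          integral_finsetSum _ fun x _ => hnew x]
        rw [Finset.sum_add_distrib, ← Finset.mul_sum, mul_comm]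

/-- **Variance decomposition bound**:
`Var(Û^W − U) ≤ E[Φ₊] · sup_{i ≠ 0} h(i)² + E[U]`, assuming the supremum is finite. -/
theorem uhatW_variance_decomposition {X : Type*} [Fintype X] {m : ℕ}
    (p : X → Fin m → ℝ≥0) (hp : ∀ j, ∑ x, p x j = 1)
    (n : Fin m → ℝ≥0) (hn : ∀ j, 0 < n j) (t : Fin m → ℝ≥0)
    (r : ℝ) (hr : 0 < r)
    (hbdd : BddAbove (Set.range fun i : {i : Fin m → ℕ // i ≠ 0} => (hcoef r t i.1) ^ 2)) :
    variance (fun ω => UhatW r t ω - numNew ω) (jointLaw X m (fun x j => n j * p x j) t)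
      ≤ (∫ ω, numSeen ω ∂(jointLaw X m (fun x j => n j * p x j) t))
            * (⨆ i : {i : Fin m → ℕ // i ≠ 0}, (hcoef r t i.1) ^ 2)
          + ∫ ω, numNew ω ∂(jointLaw X m (fun x j => n j * p x j) t) :=
  uhatW_variance_decomposition_general p n t r hbdd
end
end

section
/- Uniform bound on the weighted coefficients: Let t_1,...,t_m ≥ 0 with t_1 = max_j t_j ≥ 1, let A := {j : t_j > 1}, let r > 0 and L ~ Poisson(r). Then for every tuple (i_1,...,i_m) of nonnegative integers, (∏_{j=1}^m t_j^{i_j}) · P(L ≥ ∑_{j∈A} i_j) ≤ e^{r(t_1 − 1)}. -/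
open MeasureTheory ProbabilityTheory Real Finset
open scoped NNReal Nat

/-!
Split the product according to whether `t_j > 1`: the factors with `t_j ≤ 1` are at most `1`
and the others at most `t_{j₁}`, so the product is at most `t_{j₁}^n` with `n = ∑_{j∈A} i_j`.
Since `t_{j₁} ≥ 1`, Markov's inequality for `t_{j₁}^L` bounds `t_{j₁}^n P(L ≥ n)` by the
generating function `E[t_{j₁}^L] = e^{r(t_{j₁} − 1)}`.
-/

theorem NNReal.prod_pow_le_pow_sum_filter_one_lt {ι : Type*} (s : Finset ι) (t : ι → ℝ≥0)
    {b : ℝ≥0} (htb : ∀ j ∈ s, t j ≤ b) (i : ι → ℕ) :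
    ∏ j ∈ s, t j ^ i j ≤ b ^ ∑ j ∈ s with 1 < t j, i j := by
  calc ∏ j ∈ s, t j ^ i j
      = (∏ j ∈ s with 1 < t j, t j ^ i j) * ∏ j ∈ s with ¬1 < t j, t j ^ i j :=
        (prod_filter_mul_prod_filter_not s _ _).symm
    _ ≤ (∏ j ∈ s with 1 < t j, b ^ i j) * 1 := by
        gcongr with j hj
        · exact htb j (mem_filter.1 hj).1
        · exact prod_le_one' fun j hj ↦ pow_le_one₀ zero_le (not_lt.1 (mem_filter.1 hj).2)
    _ = b ^ ∑ j ∈ s with 1 < t j, i j := by rw [mul_one, prod_pow_eq_pow_sum]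

namespace ProbabilityTheory

theorem hasSum_poissonMeasure_mul_pow (r : ℝ≥0) (s : ℝ) :
    HasSum (fun n ↦ exp (-r) * r ^ n / n ! * s ^ n) (exp (r * (s - 1))) := by
  have h := (NormedSpace.expSeries_div_hasSum_exp ((r : ℝ) * s)).mul_left (exp (-r))
  rw [← exp_eq_exp_ℝ, ← exp_add, show -(r : ℝ) + r * s = r * (s - 1) by ring] at h
  refine h.congr_fun fun n ↦ ?_
  rw [mul_pow]
  ring

theorem integrable_pow_poissonMeasure (r : ℝ≥0) (s : ℝ) :
    Integrable (fun n : ℕ ↦ s ^ n) (poissonMeasure r) := by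
  rw [integrable_poissonMeasure_iff]
  simpa only [norm_pow, Real.norm_eq_abs] using (hasSum_poissonMeasure_mul_pow r |s|).summable

theorem integral_pow_poissonMeasure (r : ℝ≥0) (s : ℝ) :
    ∫ n, s ^ n ∂poissonMeasure r = exp (r * (s - 1)) :=
  (hasSum_integral_poissonMeasure (integrable_pow_poissonMeasure r s)).unique
    (hasSum_poissonMeasure_mul_pow r s)

theorem pow_mul_poissonMeasure_real_le_exp (r : ℝ≥0) {s : ℝ} (hs : 1 ≤ s) (n : ℕ) :
    s ^ n * (poissonMeasure r).real {k | n ≤ k} ≤ exp (r * (s - 1)) := by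
  have hnonneg : 0 ≤ᵐ[poissonMeasure r] fun k ↦ s ^ k :=
    Filter.Eventually.of_forall fun k ↦ pow_nonneg (zero_le_one.trans hs) k
  calc s ^ n * (poissonMeasure r).real {k | n ≤ k}
      ≤ s ^ n * (poissonMeasure r).real {k | s ^ n ≤ s ^ k} := by
        refine mul_le_mul_of_nonneg_left (measureReal_mono fun k hk ↦ ?_) (by positivity)
        exact pow_le_pow_right₀ hs hk
    _ ≤ ∫ k, s ^ k ∂poissonMeasure r :=
        mul_meas_ge_le_integral_of_nonneg hnonneg (integrable_pow_poissonMeasure r s) _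
    _ = exp (r * (s - 1)) := integral_pow_poissonMeasure r s

end ProbabilityTheory

/-- **Uniform bound on the weighted coefficients**: if `t_{j₁} = max_j t_j ≥ 1`,
`A = {j : t_j > 1}` and `L ~ Poisson(r)` with `r > 0`, then for every tuple `i` of
nonnegative integers, `(∏_j t_j^{i_j}) · P(L ≥ ∑_{j∈A} i_j) ≤ e^{r(t_{j₁} − 1)}`. -/
theorem weighted_coefficient_bound {m : ℕ} (t : Fin m → ℝ≥0)
    (j₁ : Fin m) (hmax : ∀ j, t j ≤ t j₁) (h1 : 1 ≤ t j₁)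
    (r : ℝ) (hr : 0 < r) (i : Fin m → ℕ) :
    (∏ j, (t j : ℝ) ^ (i j)) *
        (poissonMeasure r.toNNReal
          {k : ℕ | ∑ j ∈ Finset.univ.filter (fun j => 1 < t j), i j ≤ k}).toReal
      ≤ Real.exp (r * ((t j₁ : ℝ) - 1)) := by
  have hprod : ∏ j, (t j : ℝ) ^ i j ≤ (t j₁ : ℝ) ^ ∑ j with 1 < t j, i j := by
    exact_mod_cast NNReal.prod_pow_le_pow_sum_filter_one_lt univ t (fun j _ ↦ hmax j) i
  calc (∏ j, (t j : ℝ) ^ i j) * (poissonMeasure r.toNNReal).real {k | ∑ j with 1 < t j, i j ≤ k}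
      ≤ (t j₁ : ℝ) ^ (∑ j with 1 < t j, i j) *
          (poissonMeasure r.toNNReal).real {k | ∑ j with 1 < t j, i j ≤ k} := by
        gcongr
    _ ≤ exp (r.toNNReal * ((t j₁ : ℝ) - 1)) :=
        pow_mul_poissonMeasure_real_le_exp _ (by exact_mod_cast h1) _
    _ = exp (r * ((t j₁ : ℝ) - 1)) := by rw [Real.coe_toNNReal r hr.le]
end

section
/- Fact 1: For every y > 0 and every random variable L taking values in the nonnegative integers, |−∑_{i=0}^∞ (P(L ≥ i)/i!)(−y)^i + e^{−y}| ≤ (max_{0 ≤ s ≤ y} |E[(−s)^L / L!]|) · (1 − e^{−y}), where the series converges absolutely. -/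
/-!
Write `g s = E[(-s)^L / L!]`. Taylor's formula with integral remainder for `e^{-t}` gives
`∑_{i ≤ k} (-y)^i / i! - e^{-y} = ∫_0^y (s - y)^k / k! e^{-s} ds`. Pairing the tail probabilities
`P(L ≥ i)` with `(-y)^i / i!` is the expectation of the partial sum up to `L`, so by Fubini the
quantity inside the absolute value is `-∫_0^y g(y - s) e^{-s} ds`. Bounding `|g|` by its supremum
on `[0, y]` leaves `∫_0^y e^{-s} ds = 1 - e^{-y}`.
-/

open MeasureTheory Real Finset
open scoped Nat

theorem hasDerivAt_neg_sum_sub_pow_div_factorial_mul_exp_neg (y s : ℝ) (k : ℕ) :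
    HasDerivAt (fun t => -(∑ i ∈ range (k + 1), (t - y) ^ i / (i ! : ℝ)) * exp (-t))
      ((s - y) ^ k / (k ! : ℝ) * exp (-s)) s := by
  induction k with
  | zero => simpa using (hasDerivAt_neg s).exp.fun_neg
  | succ k ih =>
    have hk : ((k + 1)! : ℝ) = (k + 1) * k ! := by push_cast [Nat.factorial_succ]; ring
    have hpow : HasDerivAt (fun t => (t - y) ^ (k + 1) / ((k + 1)! : ℝ))
        ((s - y) ^ k / (k ! : ℝ)) s := by
      refine ((((hasDerivAt_id s).sub_const y).fun_pow (k + 1)).div_const _).congr_deriv ?_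
      rw [hk]
      field_simp
      simp
    simp_rw [sum_range_succ _ (k + 1), neg_add, add_mul]
    refine (ih.add (hpow.fun_neg.fun_mul (hasDerivAt_neg s).exp)).congr_deriv ?_
    rw [hk]
    field_simp
    ring

theorem integral_sub_pow_div_factorial_mul_exp_neg (y : ℝ) (k : ℕ) :
    ∫ s in 0..y, (s - y) ^ k / (k ! : ℝ) * exp (-s) =
      ∑ i ∈ range (k + 1), (-y) ^ i / (i ! : ℝ) - exp (-y) := by
  have hsum_self : ∑ i ∈ range (k + 1), (y - y) ^ i / (i ! : ℝ) = 1 := by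
    simp [sum_range_succ']
  rw [intervalIntegral.integral_eq_sub_of_hasDerivAt
    (fun s _ => hasDerivAt_neg_sum_sub_pow_div_factorial_mul_exp_neg y s k)
    (by apply Continuous.intervalIntegrable; fun_prop), hsum_self]
  simp only [zero_sub, neg_zero, exp_zero]
  ring

theorem tsum_measureReal_setOf_le_smul_eq_integral_sum_range {E : Type*}
    [NormedAddCommGroup E] [NormedSpace ℝ E] [CompleteSpace E] (ν : Measure ℕ)
    [IsFiniteMeasure ν] {a : ℕ → E} (ha : Summable fun i => ‖a i‖) :
    ∑' i, ν.real {k | i ≤ k} • a i = ∫ k, ∑ i ∈ range (k + 1), a i ∂ν := by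
  have hsum : ∀ n, ∑' i, {k | i ≤ k}.indicator (fun _ => a i) n = ∑ i ∈ range (n + 1), a i := by
    intro n
    rw [tsum_eq_sum (s := range (n + 1)) fun i hi => by simp_all]
    exact sum_congr rfl fun i hi => by simp_all
  have hint : ∀ i, Integrable ({k | i ≤ k}.indicator fun _ => a i) ν := fun i =>
    (integrable_const _).indicator MeasurableSet.of_discrete
  have hnorm : Summable fun i => ∫ k, ‖{k | i ≤ k}.indicator (fun _ => a i) k‖ ∂ν := by
    refine (ha.mul_left (ν.real Set.univ)).of_nonneg_of_le
      (fun i => integral_nonneg fun _ => norm_nonneg _) fun i => ?_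
    simp_rw [norm_indicator_eq_indicator_norm]
    rw [integral_indicator_const _ MeasurableSet.of_discrete, smul_eq_mul]
    exact mul_le_mul_of_nonneg_right (measureReal_mono (Set.subset_univ _)) (norm_nonneg _)
  simp_rw [← integral_indicator_const _ MeasurableSet.of_discrete, ← hsum]
  exact integral_tsum_of_summable_integral_norm hint hnorm

theorem integral_intervalIntegral_sub_pow_div_factorial_mul_exp_neg_swap (ν : Measure ℕ)
    [IsFiniteMeasure ν] (y : ℝ) :
    ∫ k, (∫ s in 0..y, (s - y) ^ k / (k ! : ℝ) * exp (-s)) ∂ν =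
      ∫ s in 0..y, (∫ k, (s - y) ^ k / (k ! : ℝ) ∂ν) * exp (-s) := by
  have : IsFiniteMeasure (volume.restrict (Set.uIoc 0 y)) := by
    unfold Set.uIoc; infer_instance
  have hbound : ∀ s ∈ Set.uIoc 0 y, ∀ k : ℕ,
      ‖(s - y) ^ k / (k ! : ℝ) * exp (-s)‖ ≤ exp |y| * exp |y| := by
    intro s hs k
    have hs' : s ∈ Set.uIcc 0 y := Set.uIoc_subset_uIcc hs
    have hsy : |s - y| ≤ |y| := by
      simpa [abs_sub_comm] using Set.abs_sub_right_of_mem_uIcc hs'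
    have hs0 : |s| ≤ |y| := by simpa using Set.abs_sub_left_of_mem_uIcc hs'
    simp only [norm_mul, norm_div, norm_pow, Real.norm_eq_abs, Nat.abs_cast,
      abs_of_pos (exp_pos _)]
    gcongr
    · calc |s - y| ^ k / k ! ≤ exp |s - y| := pow_div_factorial_le_exp _ (abs_nonneg _) k
        _ ≤ exp |y| := exp_le_exp.2 hsy
    · exact (neg_le_abs s).trans hs0
  have hint : Integrable (Function.uncurry fun s (k : ℕ) => (s - y) ^ k / (k ! : ℝ) * exp (-s))
      ((volume.restrict (Set.uIoc 0 y)).prod ν) := by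
    refine Integrable.of_bound (Measurable.aestronglyMeasurable (by fun_prop))
      (exp |y| * exp |y|) ?_
    filter_upwards [Measure.quasiMeasurePreserving_fst.ae (ae_restrict_mem measurableSet_uIoc)]
      with p hp using hbound p.1 hp p.2
  rw [← intervalIntegral_integral_swap hint]
  simp_rw [integral_mul_const]

theorem abs_integral_pow_div_factorial_le_exp_abs (ν : Measure ℕ) [IsProbabilityMeasure ν]
    (s : ℝ) : |∫ k, s ^ k / (k ! : ℝ) ∂ν| ≤ exp |s| := by
  have hbound : ∀ k : ℕ, ‖s ^ k / (k ! : ℝ)‖ ≤ exp |s| := fun k => by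
    simpa [norm_div, norm_pow] using pow_div_factorial_le_exp _ (abs_nonneg s) k
  simpa using norm_integral_le_of_norm_le_const (μ := ν) (ae_of_all _ hbound)

theorem tsum_measureReal_setOf_le_div_factorial_mul_pow_sub_exp_neg (ν : Measure ℕ)
    [IsProbabilityMeasure ν] (y : ℝ) :
    ∑' i, ν.real {k | i ≤ k} / (i ! : ℝ) * (-y) ^ i - exp (-y) =
      ∫ s in 0..y, (∫ k, (s - y) ^ k / (k ! : ℝ) ∂ν) * exp (-s) := by
  have hsummable : Summable fun i => ‖(-y) ^ i / (i ! : ℝ)‖ := by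
    simpa [norm_div, norm_pow] using summable_pow_div_factorial |y|
  have hpartial : Integrable (fun k => ∑ i ∈ range (k + 1), (-y) ^ i / (i ! : ℝ)) ν := by
    refine Integrable.of_bound Measurable.of_discrete.aestronglyMeasurable (exp |y|)
      (ae_of_all _ fun k => (norm_sum_le _ _).trans ?_)
    simpa [norm_div, norm_pow] using sum_le_exp_of_nonneg (abs_nonneg y) (k + 1)
  calc ∑' i, ν.real {k | i ≤ k} / (i ! : ℝ) * (-y) ^ i - exp (-y)
      = ∫ k, ∑ i ∈ range (k + 1), (-y) ^ i / (i ! : ℝ) ∂ν - exp (-y) := by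
        rw [← tsum_measureReal_setOf_le_smul_eq_integral_sum_range ν hsummable]
        simp_rw [smul_eq_mul, mul_div_assoc', div_mul_eq_mul_div]
    _ = ∫ k, (∫ s in 0..y, (s - y) ^ k / (k ! : ℝ) * exp (-s)) ∂ν := by
        simp_rw [integral_sub_pow_div_factorial_mul_exp_neg]
        rw [integral_sub hpartial (integrable_const _), integral_const, probReal_univ, one_smul]
    _ = _ := integral_intervalIntegral_sub_pow_div_factorial_mul_exp_neg_swap ν y

/-- **Fact 1**: for every `y > 0` and every random variable `L` with values in the
nonnegative integers (encoded by its distribution `ν`, a probability measure on `ℕ`),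
`|−∑_{i=0}^∞ (P(L ≥ i)/i!)(−y)^i + e^{−y}| ≤ (max_{0 ≤ s ≤ y} |E[(−s)^L / L!]|)(1 − e^{−y})`. -/
theorem fact1_smoothing_bound (ν : Measure ℕ) [IsProbabilityMeasure ν] (y : ℝ) (hy : 0 < y) :
    |-∑' i : ℕ, (ν {k | i ≤ k}).toReal / (Nat.factorial i : ℝ) * (-y) ^ i + Real.exp (-y)|
      ≤ (⨆ s : Set.Icc (0 : ℝ) y,
            |∫ k, (-(s : ℝ)) ^ k / (Nat.factorial k : ℝ) ∂ν|) * (1 - Real.exp (-y)) := by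
  set M := ⨆ s : Set.Icc (0 : ℝ) y, |∫ k, (-(s : ℝ)) ^ k / (k ! : ℝ) ∂ν|
  have hbdd : BddAbove (Set.range fun s : Set.Icc (0 : ℝ) y =>
      |∫ k, (-(s : ℝ)) ^ k / (k ! : ℝ) ∂ν|) := by
    refine ⟨exp y, Set.forall_mem_range.2 fun s => ?_⟩
    refine (abs_integral_pow_div_factorial_le_exp_abs ν _).trans (exp_le_exp.2 ?_)
    rw [abs_neg, abs_of_nonneg s.2.1]
    exact s.2.2
  have hle : ∀ s ∈ Set.Ioc 0 y,
      ‖(∫ k, (s - y) ^ k / (k ! : ℝ) ∂ν) * exp (-s)‖ ≤ M * exp (-s) := by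
    intro s hs
    rw [norm_mul, norm_of_nonneg (exp_pos _).le]
    gcongr
    simpa using le_ciSup hbdd ⟨y - s, by constructor <;> linarith [hs.1, hs.2]⟩
  calc |-∑' i : ℕ, (ν {k | i ≤ k}).toReal / (i ! : ℝ) * (-y) ^ i + exp (-y)|
      = ‖∫ s in 0..y, (∫ k, (s - y) ^ k / (k ! : ℝ) ∂ν) * exp (-s)‖ := by
        rw [neg_add_eq_sub, abs_sub_comm]
        simp_rw [← measureReal_def]
        rw [tsum_measureReal_setOf_le_div_factorial_mul_pow_sub_exp_neg, Real.norm_eq_abs]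
    _ ≤ ∫ s in 0..y, M * exp (-s) :=
        intervalIntegral.norm_integral_le_of_norm_le hy.le (ae_of_all _ hle)
          (by apply Continuous.intervalIntegrable; fun_prop)
    _ = M * (1 - exp (-y)) := by
        simp [intervalIntegral.integral_comp_neg]
end

section
/- Fact 2: If L ~ Poisson(r) with r > 0, then for every s ≥ 0, |E[(−s)^L / L!]| ≤ e^{−r}. -/
open MeasureTheory ProbabilityTheory Real
open scoped NNReal

/-!
Weighting by the Poisson probabilities gives `E[(-s)^L / L!] = e^{-r} J₀(2√(rs))`, where
`J₀(2a) = ∑ (-a²)^k / (k!)²` is the Bessel function. Integrating the cosine series term by term,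
with Wallis' integrals `∫₀^π sin^{2k} = π (2k)! / (4^k (k!)²)`, yields Bessel's integral
`π J₀(2a) = ∫₀^π cos (2a sin x) dx`, whence `|J₀| ≤ 1`.
-/

open Nat Finset intervalIntegral

lemma prod_range_odd_div_even (n : ℕ) :
    ∏ i ∈ range n, (2 * (i : ℝ) + 1) / (2 * i + 2) = (2 * n)! / (4 ^ n * (n ! : ℝ) ^ 2) := by
  induction n with
  | zero => simp
  | succ k ih =>
    rw [prod_range_succ, ih, mul_add_one, factorial_succ, factorial_succ, factorial_succ]
    push_cast
    field_simp
    ring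

lemma integral_sin_pow_even_eq_factorial (n : ℕ) :
    ∫ x in 0..π, sin x ^ (2 * n) = π * (2 * n)! / (4 ^ n * (n ! : ℝ) ^ 2) := by
  rw [integral_sin_pow_even, prod_range_odd_div_even, mul_div_assoc]

lemma integral_cos_series_term_mul_sin (a : ℝ) (k : ℕ) :
    ∫ x in 0..π, (-1) ^ k * (2 * a * sin x) ^ (2 * k) / ((2 * k)! : ℝ) =
      π * ((-(a ^ 2)) ^ k / (k ! : ℝ) ^ 2) := by
  simp_rw [mul_pow _ (sin _), div_eq_inv_mul, ← mul_assoc]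
  rw [intervalIntegral.integral_const_mul, integral_sin_pow_even_eq_factorial, mul_pow, pow_mul,
    pow_mul, neg_pow]
  field_simp
  ring

lemma hasSum_integral_cos_mul_sin (a : ℝ) :
    HasSum (fun k : ℕ => π * ((-(a ^ 2)) ^ k / (k ! : ℝ) ^ 2))
      (∫ x in 0..π, cos (2 * a * sin x)) := by
  simp_rw [← integral_cos_series_term_mul_sin]
  refine hasSum_integral_of_dominated_convergence (fun k _ => |2 * a| ^ (2 * k) / (2 * k)!)
    (fun k => by fun_prop) (fun k => .of_forall fun x _ => ?_)
    (.of_forall fun _ _ => (hasSum_cosh |2 * a|).summable) intervalIntegrable_const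
    (.of_forall fun x _ => hasSum_cos _)
  rw [norm_div, norm_mul, norm_pow, norm_pow, norm_neg, norm_one, one_pow, one_mul,
    norm_natCast, norm_eq_abs]
  gcongr ?_ ^ _ / _
  rw [abs_mul]
  exact mul_le_of_le_one_right (abs_nonneg _) (abs_sin_le_one x)

lemma abs_tsum_neg_pow_div_factorial_sq_le_one {t : ℝ} (ht : 0 ≤ t) :
    |∑' k : ℕ, (-t) ^ k / (k ! : ℝ) ^ 2| ≤ 1 := by
  have hsum := (hasSum_integral_cos_mul_sin √t).tsum_eq
  rw [sq_sqrt ht, tsum_mul_left] at hsum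
  have hint : |∫ x in 0..π, cos (2 * √t * sin x)| ≤ π := by
    simpa [abs_of_pos pi_pos] using norm_integral_le_of_norm_le_const (a := 0) (b := π) (C := 1)
      (f := fun x => cos (2 * √t * sin x)) fun x _ => abs_cos_le_one _
  rw [← hsum, abs_mul, abs_of_pos pi_pos] at hint
  exact (mul_le_iff_le_one_right pi_pos).mp hint

theorem fact2_poisson_expectation_bound_general (r : ℝ≥0) (s : ℝ) (hs : 0 ≤ s) :
    |∫ k, (-s) ^ k / (Nat.factorial k : ℝ) ∂(poissonMeasure r)| ≤ Real.exp (-(r : ℝ)) := by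
  have hterm (k : ℕ) : (exp (-r) * r ^ k / k !) • ((-s) ^ k / (k ! : ℝ)) =
      exp (-r) * ((-(r * s)) ^ k / (k ! : ℝ) ^ 2) := by
    rw [smul_eq_mul, neg_mul_eq_mul_neg, mul_pow]
    ring
  rw [integral_poissonMeasure, tsum_congr hterm, tsum_mul_left, abs_mul, abs_of_pos (exp_pos _)]
  exact mul_le_of_le_one_right (exp_pos _).le
    (abs_tsum_neg_pow_div_factorial_sq_le_one (by positivity))

/-- **Fact 2**: if `L ~ Poisson(r)` with `r > 0`, then for every `s ≥ 0`,
`|E[(−s)^L / L!]| ≤ e^{−r}`. -/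
theorem fact2_poisson_expectation_bound (r : ℝ≥0) (hr : 0 < r) (s : ℝ) (hs : 0 ≤ s) :
    |∫ k, (-s) ^ k / (Nat.factorial k : ℝ) ∂(poissonMeasure r)| ≤ Real.exp (-(r : ℝ)) :=
  fact2_poisson_expectation_bound_general r s hs
end
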